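/- Let A be a finite non-empty alphabet. A finite word w over A is LSP if and only if w is a prefix of some infinite LSP word over A. -/

import Mathlib

/-!
Every LSP word `w` can be extended by one letter keeping it LSP: if `s` is the longest suffix of `w`
that is left special (if there is none, any letter will do), then `s` is a proper prefix of `w`,
and appending the letter `a` that follows this prefix occurrence creates no left special factor
that is not a prefix. Indeed a new left special factor of `w a` has the form `u a` with `u` a
left special suffix of `w`; either `u = s`, or `u` is shorter, and then `x u a` occurs inside the
prefix `s a`, so `u a` was already left special in `w`. Iterating gives an infinite word all of whose prefixes are LSP, and an infinite
word is LSP exactly when all its prefixes are.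
-/

/-- The finite word `w` is LSP: every left special factor of `w` is a prefix of `w`. -/
def LSPFin {A : Type*} (w : List A) : Prop :=
  ∀ (u : List A) (a b : A), a ≠ b → (a :: u) <:+: w → (b :: u) <:+: w → u <+: w

/-- `u` is a prefix of the infinite word `w`. -/
def PrefI {A : Type*} (u : List A) (w : ℕ → A) : Prop :=
  ∀ i (h : i < u.length), u[i] = w i

/-- `u` is a factor of the infinite word `w`. -/
def FactorI {A : Type*} (w : ℕ → A) (u : List A) : Prop :=
  ∃ k, ∀ i (h : i < u.length), u[i] = w (k + i)

/-- The infinite word `w` is LSP. -/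
def LSPInf {A : Type*} (w : ℕ → A) : Prop :=
  ∀ (u : List A) (a b : A), a ≠ b → FactorI w (a :: u) → FactorI w (b :: u) → PrefI u w

open List

section

variable {A : Type*}

def IsLeftSpecial (u w : List A) : Prop :=
  ∃ a b, a ≠ b ∧ a :: u <:+: w ∧ b :: u <:+: w

theorem LSPFin.of_prefix {p w : List A} (hw : LSPFin w) (hp : p <+: w) : LSPFin p := by
  intro u a b hab ha hb
  refine prefix_of_prefix_length_le (hw u a b hab (ha.trans hp.isInfix) (hb.trans hp.isInfix)) hp ?_
  exact Nat.le_of_lt (by simpa using ha.length_le)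

theorem LSPFin.append_singleton {w : List A} {a : A} (hw : LSPFin w)
    (h : ∀ u x y, x ≠ y → x :: u <:+ w → y :: (u ++ [a]) <:+: w → u ++ [a] <+: w) :
    LSPFin (w ++ [a]) := by
  have new_factor : ∀ u x y, x ≠ y → x :: u <:+ w ++ [a] → y :: u <:+: w → u <+: w := by
    intro u x y hxy hx hy
    obtain ⟨_ | ⟨z, u'⟩, hxu, hu'⟩ := (suffix_concat_iff.1 hx).resolve_left (cons_ne_nil x u)
    · obtain ⟨-, rfl⟩ : x = a ∧ u = [] := by simpa using hxu
      exact nil_prefix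
    · obtain ⟨rfl, rfl⟩ : x = z ∧ u = u' ++ [a] := by simpa using hxu
      exact h u' x y hxy hu' hy
  intro u x y hxy hx hy
  refine (?_ : u <+: w).trans (prefix_append w [a])
  rcases infix_concat_iff.1 hx, infix_concat_iff.1 hy with ⟨hx | hx, hy | hy⟩
  · have := (suffix_of_suffix_length_le hx hy le_rfl).eq_of_length rfl
    exact absurd (cons.inj this).1 hxy
  · exact new_factor u x y hxy hx hy
  · exact new_factor u y x hxy.symm hy hx
  · exact hw u x y hxy hx hy

theorem LSPFin.exists_append_singleton [Nonempty A] {w : List A} (hw : LSPFin w) :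
    ∃ a, LSPFin (w ++ [a]) := by
  classical
  have suffix_isLeftSpecial : ∀ (a : A) u x y, x ≠ y → x :: u <:+ w → y :: (u ++ [a]) <:+: w →
      u <:+ w ∧ IsLeftSpecial (w.drop (w.length - u.length)) w := by
    intro a u x y hxy hx hy
    have hu : u <:+ w := (suffix_cons x u).trans hx
    rw [← suffix_iff_eq_drop.1 hu]
    exact ⟨hu, x, y, hxy, hx.isInfix, (prefix_append (y :: u) [a]).isInfix.trans hy⟩
  by_cases hs : ∃ k, IsLeftSpecial (w.drop k) w
  swap
  · refine ⟨Classical.arbitrary A, hw.append_singleton fun u x y hxy hx hy => ?_⟩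
    exact absurd ⟨_, (suffix_isLeftSpecial _ u x y hxy hx hy).2⟩ hs
  -- `s` is the longest left special suffix of `w`
  set s := w.drop (Nat.find hs)
  obtain ⟨x₀, y₀, hxy₀, hx₀, hy₀⟩ : IsLeftSpecial s w := Nat.find_spec hs
  have hsw : s <+: w := hw s x₀ y₀ hxy₀ hx₀ hy₀
  have hs_suffix : s <:+ w := drop_suffix _ w
  obtain ⟨a, hsa⟩ : ∃ a, s ++ [a] <+: w :=
    ⟨_, concat_get_prefix hsw (by simpa using hx₀.length_le)⟩
  refine ⟨a, hw.append_singleton fun u x y hxy hx hy => ?_⟩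
  obtain ⟨hu, hLS⟩ := suffix_isLeftSpecial _ u x y hxy hx hy
  have hlen : u.length ≤ s.length := by
    have := Nat.find_min' hs hLS
    have := hu.length_le
    simp only [s, length_drop]
    omega
  rcases hlen.eq_or_lt with heq | hlt
  · rwa [(suffix_of_suffix_length_le hu hs_suffix heq.le).eq_of_length heq]
  · obtain ⟨p, hp⟩ := suffix_of_suffix_length_le hx hs_suffix (by simpa using hlt)
    refine hw (u ++ [a]) x y hxy (IsInfix.trans ⟨p, [], ?_⟩ hsa.isInfix) hy
    simp [← hp]

theorem prefI_iff_eq_take {u : List A} {v : Stream' A} :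
    PrefI u v ↔ u = Stream'.take u.length v := by
  constructor
  · intro h
    exact ext_getElem (by simp) fun i hi _ => by rw [Stream'.take_get]; exact h i hi
  · intro h i hi
    simp only [ext_getElem_iff, Stream'.take_get] at h
    exact h.2 i hi (by simpa using hi)

theorem FactorI.exists_infix_take {u : List A} {v : Stream' A} (h : FactorI v u) :
    ∃ n, u <:+: Stream'.take n v := by
  obtain ⟨k, hk⟩ := h
  have hu : PrefI u (Stream'.drop k v) := fun i hi => (hk i hi).trans (congrArg v (add_comm k i))
  refine ⟨k + u.length, ?_⟩
  rw [Stream'.take_add, ← prefI_iff_eq_take.1 hu]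
  exact infix_append_right

theorem factorI_of_infix_take {u : List A} {v : Stream' A} {n : ℕ}
    (h : u <:+: Stream'.take n v) : FactorI v u := by
  obtain ⟨s, t, hst⟩ := h
  refine ⟨s.length, fun i hi => ?_⟩
  have hi' : s.length + i < (Stream'.take n v).length := by rw [← hst]; simp; omega
  calc u[i] = (Stream'.take n v)[s.length + i] := by simp [← hst, getElem_append_left hi]
    _ = v (s.length + i) := Stream'.take_get _ _ _ hi'

theorem lspInf_iff_forall_lspFin_take {v : Stream' A} :
    LSPInf v ↔ ∀ n, LSPFin (Stream'.take n v) := by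
  constructor
  · intro hv n u a b hab ha hb
    rw [prefI_iff_eq_take.1 (hv u a b hab (factorI_of_infix_take ha) (factorI_of_infix_take hb))]
    exact Stream'.take_prefix_take_left _ _ _ (Nat.le_of_lt (by simpa using ha.length_le))
  · intro h u a b hab ha hb
    obtain ⟨m, hm⟩ := ha.exists_infix_take
    obtain ⟨n, hn⟩ := hb.exists_infix_take
    have hu : u <+: Stream'.take (max m n) v := h _ u a b hab
      (hm.trans (Stream'.take_prefix_take_left _ _ _ (le_max_left m n)).isInfix)
      (hn.trans (Stream'.take_prefix_take_left _ _ _ (le_max_right m n)).isInfix)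
    have := prefix_iff_eq_take.1 hu
    rwa [Stream'.take_take, min_eq_right (by simpa using hu.length_le), ← prefI_iff_eq_take] at this

theorem exists_forall_append_take {P : List A → Prop} (step : ∀ u, P u → ∃ a, P (u ++ [a]))
    {w : List A} (hw : P w) : ∃ c : Stream' A, ∀ n, P (w ++ Stream'.take n c) := by
  choose f hf using step
  let W : ℕ → {u // P u} := fun n =>
    Nat.rec ⟨w, hw⟩ (fun _ u => ⟨u.1 ++ [f u.1 u.2], hf u.1 u.2⟩) n
  let c : Stream' A := fun n => f (W n).1 (W n).2
  have hW : ∀ n, (W n).1 = w ++ Stream'.take n c := by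
    intro n
    induction n with
    | zero => simp [W]
    | succ n ih => rw [← Stream'.concat_take_get, ← append_assoc, ← ih]; rfl
  exact ⟨c, fun n => hW n ▸ (W n).2⟩

end

theorem finite_lsp_iff_prefix_of_infinite_lsp_general {A : Type*} [Nonempty A]
    (w : List A) : LSPFin w ↔ ∃ v : ℕ → A, LSPInf v ∧ PrefI w v := by
  constructor
  · intro hw
    obtain ⟨c, hc⟩ := exists_forall_append_take (fun _ hu => hu.exists_append_singleton) hw
    refine ⟨w ++ₛ c, lspInf_iff_forall_lspFin_take.2 fun n => ?_, ?_⟩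
    · have hwn := hc n
      rw [Stream'.append_take] at hwn
      exact hwn.of_prefix (Stream'.take_prefix_take_left _ _ _ (Nat.le_add_left n _))
    · rw [prefI_iff_eq_take, Stream'.take_append_of_le_length _ _ _ le_rfl, take_length]
  · rintro ⟨v, hv, hwv⟩
    rw [prefI_iff_eq_take.1 hwv]
    exact lspInf_iff_forall_lspFin_take.1 hv _

theorem finite_lsp_iff_prefix_of_infinite_lsp {A : Type*} [Fintype A] [Nonempty A]
    (w : List A) : LSPFin w ↔ ∃ v : ℕ → A, LSPInf v ∧ PrefI w v :=
  finite_lsp_iff_prefix_of_infinite_lsp_general w
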